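/- arXiv:1101.0758 — 2 statements merged into one kernel-verified Lean document; each statement's English description precedes it below -/
import Mathlib

section
/- Let λ = ((1^n), ∅, …, ∅) be the r-partition whose first component is the one-column partition (1^n) and whose other components are empty. Then for every r-partition μ of size n: β_{λμ} = 1 if μ = ((1^{n_1}), (1^{n_2}), …, (1^{n_r})) for some nonnegative integers n_1,…,n_r with n_1+…+n_r = n (each component a one-column partition or empty), and β_{λμ} = 0 otherwise. -/
open scoped BigOperators

namespace CQSA

/-- A box of a multidiagram: component `k`, row `i`, column `j` (0-indexed column). -/
abbrev Box (r : ℕ) (m : Fin r → ℕ) : Type := Σ k : Fin r, Fin (m k) × ℕ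

/-- An entry of a tableau: component `c`, letter `a` (0-indexed). -/
abbrev Entry (r : ℕ) (m : Fin r → ℕ) : Type := Σ c : Fin r, Fin (m c)

/-- Multicompositions with `m k` parts in component `k`. -/
abbrev MComp (r : ℕ) (m : Fin r → ℕ) : Type := (k : Fin r) → Fin (m k) → ℕ

variable {r : ℕ} {m : Fin r → ℕ}

/-- The size `|λ|` of a multicomposition. -/
def size (lam : MComp r m) : ℕ := ∑ k, ∑ i, lam k i

/-- A multicomposition is a multipartition if each component is weakly decreasing. -/
def IsMPartition (lam : MComp r m) : Prop := ∀ k, Antitone (lam k)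

/-- `ζ(λ) = (|λ^(1)|, …, |λ^(r)|)`. -/
def zeta (lam : MComp r m) : Fin r → ℕ := fun k => ∑ i, lam k i

/-- Dominance order: `mu ⊴ lam`. -/
def DomLE (mu lam : MComp r m) : Prop :=
  ∀ (k : Fin r) (i : Fin (m k)),
    ((∑ l ∈ Finset.univ.filter (fun l => l < k), ∑ j, mu l j) +
        ∑ j ∈ Finset.univ.filter (fun j => j ≤ i), mu k j) ≤
      ((∑ l ∈ Finset.univ.filter (fun l => l < k), ∑ j, lam l j) +
        ∑ j ∈ Finset.univ.filter (fun j => j ≤ i), lam k j)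

/-- Membership of a box in the diagram `[λ]`. -/
def InDiag (lam : MComp r m) (x : Box r m) : Prop := x.2.2 < lam x.1 x.2.1

/-- The skew diagram `[λ] \ [ν]` as a predicate on boxes. -/
def SkewD (lamBig lamSmall : MComp r m) (x : Box r m) : Prop :=
  InDiag lamBig x ∧ ¬ InDiag lamSmall x

/-- Order on entries: `(a,c) ≤ (a',c')` iff `c < c'`, or `c = c'` and `a ≤ a'`. -/
def entryLE (e f : Entry r m) : Prop :=
  (e.1 : ℕ) < (f.1 : ℕ) ∨ ((e.1 : ℕ) = (f.1 : ℕ) ∧ (e.2 : ℕ) ≤ (f.2 : ℕ))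

/-- Strict order on entries. -/
def entryLT (e f : Entry r m) : Prop :=
  (e.1 : ℕ) < (f.1 : ℕ) ∨ ((e.1 : ℕ) = (f.1 : ℕ) ∧ (e.2 : ℕ) < (f.2 : ℕ))

/-- Reading order on boxes: `x ⪰ y`, i.e. `x ≻ y` or `x = y`, where
`(i,j,k) ≻ (i',j',k')` iff `k > k'`, or `k = k'` and `j > j'`, or
`k = k'`, `j = j'` and `i < i'`. -/
def BoxGE (x y : Box r m) : Prop :=
  (y.1 : ℕ) < (x.1 : ℕ) ∨
    ((x.1 : ℕ) = (y.1 : ℕ) ∧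
      (y.2.2 < x.2.2 ∨ (x.2.2 = y.2.2 ∧ (x.2.1 : ℕ) ≤ (y.2.1 : ℕ))))

/-- Semistandardness of a filling `T` of the set of boxes `D` with weight `mu`. -/
structure IsSST (D : Box r m → Prop) (mu : MComp r m)
    (T : {x : Box r m // D x} → Entry r m) : Prop where
  comp_le : ∀ x : {x : Box r m // D x}, (x.1.1 : ℕ) ≤ ((T x).1 : ℕ)
  row_weak : ∀ x y : {x : Box r m // D x},
    x.1.1 = y.1.1 → (x.1.2.1 : ℕ) = (y.1.2.1 : ℕ) → x.1.2.2 + 1 = y.1.2.2 →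
      entryLE (T x) (T y)
  col_strict : ∀ x y : {x : Box r m // D x},
    x.1.1 = y.1.1 → (x.1.2.1 : ℕ) + 1 = (y.1.2.1 : ℕ) → x.1.2.2 = y.1.2.2 →
      entryLT (T x) (T y)
  weight : ∀ e : Entry r m, mu e.1 e.2 = Nat.card {x : {x : Box r m // D x} // T x = e}

/-- Singularity of a tableau: every prefix of the component-`c` reading word has
weakly decreasing content, for every `c`. -/
def IsSingular (D : Box r m → Prop) (T : {x : Box r m // D x} → Entry r m) : Prop :=
  ∀ (b : {x : Box r m // D x}) (a : ℕ),
    Nat.card {y : {x : Box r m // D x} //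
        (T y).1 = (T b).1 ∧ BoxGE y.1 b.1 ∧ ((T y).2 : ℕ) = a + 1} ≤
      Nat.card {y : {x : Box r m // D x} //
        (T y).1 = (T b).1 ∧ BoxGE y.1 b.1 ∧ ((T y).2 : ℕ) = a}

/-- The number of semistandard tableaux on the boxes `D` with weight `mu`. -/
noncomputable def nSST (D : Box r m → Prop) (mu : MComp r m) : ℕ :=
  Nat.card {T : {x : Box r m // D x} → Entry r m // IsSST D mu T}

/-- The number of singular semistandard tableaux on the boxes `D` with weight `mu`. -/
noncomputable def nSingSST (D : Box r m → Prop) (mu : MComp r m) : ℕ :=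
  Nat.card {T : {x : Box r m // D x} → Entry r m // IsSST D mu T ∧ IsSingular D T}

/-- `#CT₀(λ,μ)`: the number of semistandard tableaux of shape `λ` and weight `μ`. -/
noncomputable def nCT (lam mu : MComp r m) : ℕ := nSST (InDiag lam) mu

/-- `β_{λμ}`: the number of singular semistandard tableaux of shape `λ` and weight `μ`. -/
noncomputable def beta (lam mu : MComp r m) : ℕ := nSingSST (InDiag lam) mu


/-- The Kostka number `K_{ν μ}`: the number of ordinary semistandard Young
tableaux of shape `ν` (rows indexed by `ℕ`) and weight `μ` (a finite sequence of
nonnegative integers, indexed by the linearly ordered alphabet `ι`). -/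
noncomputable def kostka (nu : ℕ → ℕ) {ι : Type} [LinearOrder ι] (mu : ι → ℕ) : ℕ :=
  Nat.card {T : {x : ℕ × ℕ // x.2 < nu x.1} → ι //
    (∀ x y : {x : ℕ × ℕ // x.2 < nu x.1}, x.1.1 = y.1.1 → x.1.2 + 1 = y.1.2 → T x ≤ T y) ∧
    (∀ x y : {x : ℕ × ℕ // x.2 < nu x.1}, x.1.1 + 1 = y.1.1 → x.1.2 = y.1.2 → T x < T y) ∧
    (∀ a : ι, mu a = Nat.card {x : {x : ℕ × ℕ // x.2 < nu x.1} // T x = a})}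

/-- Extension of a finite tuple by zeros. -/
def extF {L : ℕ} (f : Fin L → ℕ) : ℕ → ℕ := fun i => if h : i < L then f ⟨i, h⟩ else 0

/-- The Schur polynomial of the partition `ν` (of size `d`) in `N` variables:
`s_ν(x_1,…,x_N) = ∑_μ K_{νμ} x^μ`. -/
noncomputable def schurP (N d : ℕ) (nu : ℕ → ℕ) : MvPolynomial (Fin N) ℤ :=
  ∑ f ∈ (Fintype.piFinset fun _ : Fin N => Finset.range (d + 1)) |>.filter
      (fun f => ∑ i, f i = d),
    (kostka nu f : ℤ) • MvPolynomial.monomial (Finsupp.equivFunOnFinite.symm f) 1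

/-- `lr` is the family of Littlewood–Richardson coefficients: for all partitions
`α`, `β`, the product of the Schur polynomials `s_α s_β` (in any number `N` of
variables containing the supports) equals `∑_γ lr α β γ • s_γ`, the sum running
over all partitions `γ` of size `|α| + |β|` with at most `N` parts. -/
noncomputable def IsLR (lr : (ℕ → ℕ) → (ℕ → ℕ) → (ℕ → ℕ) → ℕ) : Prop :=
  ∀ (N : ℕ) (al be : ℕ → ℕ), Antitone al → Antitone be →
    (∀ i, N ≤ i → al i = 0) → (∀ i, N ≤ i → be i = 0) →
    schurP N (∑ i ∈ Finset.range N, al i) al *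
        schurP N (∑ i ∈ Finset.range N, be i) be =
      ∑ g ∈ (Fintype.piFinset fun _ : Fin N =>
            Finset.range ((∑ i ∈ Finset.range N, al i) + (∑ i ∈ Finset.range N, be i) + 1)) |>.filter
          (fun g => (∀ i j : Fin N, i ≤ j → g j ≤ g i) ∧
            ∑ i, g i = (∑ i ∈ Finset.range N, al i) + (∑ i ∈ Finset.range N, be i)),
        (lr al be (extF g) : ℤ) •
          schurP N ((∑ i ∈ Finset.range N, al i) + (∑ i ∈ Finset.range N, be i)) (extF g)

/-- The polynomial `tS_λ(x) = ∑_μ #CT₀(λ,μ) x^μ`, summed over all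
`r`-compositions `μ` of size `d`, in the variables `x^{(k)}_i`. -/
noncomputable def tS (d : ℕ) (lam : MComp r m) : MvPolynomial (Entry r m) ℤ :=
  ∑ f ∈ (Fintype.piFinset fun _ : Entry r m => Finset.range (d + 1)) |>.filter
      (fun f => ∑ e, f e = d),
    (nCT lam (fun k i => f ⟨k, i⟩) : ℤ) •
      MvPolynomial.monomial (Finsupp.equivFunOnFinite.symm f) 1

/-- `S_μ(x) = ∏_k s_{μ^{(k)}}(x^{(k)})`, the product of Schur polynomials. -/
noncomputable def SchurProd (mu : MComp r m) : MvPolynomial (Entry r m) ℤ :=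
  ∏ k : Fin r, MvPolynomial.rename (fun i : Fin (m k) => (⟨k, i⟩ : Entry r m))
    (schurP (m k) (∑ i, mu k i) (extF (mu k)))

/-- Membership in `Θ(λ,μ)`: a chain `λ = λ_{⟨r⟩} ⊇ … ⊇ λ_{⟨0⟩} = ∅` of
`r`-partitions with `(λ_{⟨k⟩})^{(k+1)} = ∅` for `1 ≤ k ≤ r-1` and
`|λ_{⟨k⟩}| - |λ_{⟨k-1⟩}| = |μ^{(k)}|` for `1 ≤ k ≤ r`. -/
def IsTheta (lam mu : MComp r m) (L : Fin (r + 1) → MComp r m) : Prop :=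
  (∀ κ, IsMPartition (L κ)) ∧
  L (Fin.last r) = lam ∧
  (∀ (c : Fin r) (i : Fin (m c)), L 0 c i = 0) ∧
  (∀ (k : Fin r) (c : Fin r) (i : Fin (m c)), L k.castSucc c i ≤ L k.succ c i) ∧
  (∀ (k : ℕ) (h : k < r), 1 ≤ k →
    ∀ i : Fin (m ⟨k, h⟩), L ⟨k, Nat.lt_succ_of_lt h⟩ ⟨k, h⟩ i = 0) ∧
  (∀ k : Fin r, size (L k.succ) = size (L k.castSucc) + ∑ i, mu k i)

/-- The multicomposition `(∅, …, ∅, w, ∅, …, ∅)` concentrated in component `k`. -/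
def unitWeight (k : Fin r) (w : Fin (m k) → ℕ) : MComp r m :=
  fun c i => if h : c = k then w (Fin.cast (congrArg m h) i) else 0

/-- The index in `Fin r` of the `j`-th member of the `k`-th block, for blocks of
sizes `rs 0, …, rs (g-1)` with `∑ rs = r`. -/
def blockIdx {g : ℕ} (rs : Fin g → ℕ) (hsum : ∑ l, rs l = r) (k : Fin g) (j : Fin (rs k)) :
    Fin r :=
  ⟨(∑ l ∈ Finset.univ.filter (fun l => l < k), rs l) + j, by
    classical
    have hj := j.isLt
    have h1 : (∑ l ∈ Finset.univ.filter (fun l => l < k), rs l) + rs k ≤ ∑ l, rs l := by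
      have hk : k ∉ Finset.univ.filter (fun l => l < k) := by simp
      have h2 : (∑ l ∈ insert k (Finset.univ.filter (fun l => l < k)), rs l)
          = (∑ l ∈ Finset.univ.filter (fun l => l < k), rs l) + rs k := by
        rw [Finset.sum_insert hk]; ring
      rw [← h2]
      exact Finset.sum_le_sum_of_subset (Finset.subset_univ _)
    omega⟩

/-- The permutation of the variables `x^{(k)}_i` within the `k`-th set induced
by `σ ∈ S_{m_k}`. -/
def blockPermFun (k : Fin r) (sg : Equiv.Perm (Fin (m k))) : Entry r m → Entry r m :=
  fun e => if h : e.1 = k then ⟨k, sg (Fin.cast (congrArg m h) e.2)⟩ else e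

/-- rank of an entry -/
def erank (e : Entry r m) : ℕ :=
  (∑ l ∈ Finset.univ.filter (fun l => l < e.1), m l) + (e.2 : ℕ)

lemma psum_lt {c c' : Fin r} (h : (c : ℕ) < (c' : ℕ)) :
    (∑ l ∈ Finset.univ.filter (fun l => l < c), m l) + m c ≤
      ∑ l ∈ Finset.univ.filter (fun l => l < c'), m l := by
  classical
  have hc : c ∉ Finset.univ.filter (fun l => l < c) := by simp
  have h2 : (∑ l ∈ insert c (Finset.univ.filter (fun l => l < c)), m l)
      = (∑ l ∈ Finset.univ.filter (fun l => l < c), m l) + m c := by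
    rw [Finset.sum_insert hc]; ring
  rw [← h2]
  apply Finset.sum_le_sum_of_subset
  intro x hx
  simp only [Finset.mem_insert, Finset.mem_filter, Finset.mem_univ, true_and] at hx ⊢
  have hcc' : c < c' := Fin.lt_def.mpr h
  rcases hx with rfl | hx
  · exact hcc'
  · exact lt_trans hx hcc'

lemma psum_congr {c c' : Fin r} (h : (c : ℕ) = (c' : ℕ)) :
    (∑ l ∈ Finset.univ.filter (fun l => l < c), m l)
      = ∑ l ∈ Finset.univ.filter (fun l => l < c'), m l := by
  have : c = c' := Fin.ext h
  rw [this]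

lemma erank_lt_of {e f : Entry r m} (h : entryLT e f) : erank e < erank f := by
  rcases h with h | ⟨h1, h2⟩
  · have hp := psum_lt (m := m) h
    have he2 : (e.2 : ℕ) < m e.1 := e.2.isLt
    unfold erank; omega
  · have hp := psum_congr (m := m) h1
    unfold erank; omega

lemma erank_le_of {e f : Entry r m} (h : entryLE e f) : erank e ≤ erank f := by
  rcases h with h | ⟨h1, h2⟩
  · have hp := psum_lt (m := m) h
    have he2 : (e.2 : ℕ) < m e.1 := e.2.isLt
    unfold erank; omega
  · have hp := psum_congr (m := m) h1
    unfold erank; omega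

lemma entry_total (e f : Entry r m) : entryLT e f ∨ e = f ∨ entryLT f e := by
  obtain ⟨c, a⟩ := e; obtain ⟨c', a'⟩ := f
  rcases Nat.lt_trichotomy (c : ℕ) (c' : ℕ) with h | h | h
  · exact Or.inl (Or.inl h)
  · have : c = c' := Fin.ext h
    subst this
    rcases Nat.lt_trichotomy (a : ℕ) (a' : ℕ) with h2 | h2 | h2
    · exact Or.inl (Or.inr ⟨rfl, h2⟩)
    · exact Or.inr (Or.inl (by rw [Fin.ext h2]))
    · exact Or.inr (Or.inr (Or.inr ⟨rfl, h2⟩))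
  · exact Or.inr (Or.inr (Or.inl h))

lemma erank_injective : Function.Injective (erank (r := r) (m := m)) := by
  intro e f h
  rcases entry_total e f with hlt | heq | hlt
  · exact absurd h (Nat.ne_of_lt (erank_lt_of hlt))
  · exact heq
  · exact absurd h.symm (Nat.ne_of_lt (erank_lt_of hlt))

lemma entryLT_iff (e f : Entry r m) : entryLT e f ↔ erank e < erank f := by
  constructor
  · exact erank_lt_of
  · intro h
    rcases entry_total e f with hlt | heq | hlt
    · exact hlt
    · subst heq; omega
    · exact absurd (erank_lt_of hlt) (by omega)

lemma strictMono_of_succ {n : ℕ} (g : Fin n → ℕ)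
    (h : ∀ (i : ℕ) (h1 : i + 1 < n), g ⟨i, Nat.lt_of_succ_lt h1⟩ < g ⟨i + 1, h1⟩) :
    ∀ (i j : ℕ) (hi : i < n) (hj : j < n), i < j → g ⟨i, hi⟩ < g ⟨j, hj⟩ := by
  have H : ∀ (d i : ℕ) (hi : i + d + 1 < n), g ⟨i, by omega⟩ < g ⟨i + d + 1, hi⟩ := by
    intro d
    induction d with
    | zero => intro i hi; exact h i hi
    | succ d ih =>
      intro i hi
      have h1 : i + d + 1 < n := by omega
      exact lt_trans (ih i h1) (h (i + d + 1) hi)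
  intro i j hi hj hij
  obtain ⟨d, rfl⟩ : ∃ d, j = i + d + 1 := ⟨j - i - 1, by omega⟩
  exact H d i hj

lemma natcard_le_one (α : Type*) [Subsingleton α] : Nat.card α ≤ 1 := by
  rcases isEmpty_or_nonempty α with h | h
  · simp
  · exact le_of_eq Nat.card_unique

lemma antitone01 {M : ℕ} (g : Fin M → ℕ) (hg : Antitone g) (h1 : ∀ i, g i ≤ 1) (i : Fin M) :
    g i = if (i : ℕ) < ∑ j, g j then 1 else 0 := by
  classical
  split_ifs with h
  · by_contra hne
    have hgi : g i = 0 := by have := h1 i; omega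
    have hzero : ∀ j, i ≤ j → g j = 0 := fun j hj => by
      have := hg hj; omega
    have hsplit : ∑ j, g j = (∑ j ∈ Finset.univ.filter (fun j => j < i), g j)
        + ∑ j ∈ Finset.univ.filter (fun j => ¬ j < i), g j := by
      rw [Finset.sum_filter_add_sum_filter_not]
    have h2 : ∑ j ∈ Finset.univ.filter (fun j => ¬ j < i), g j = 0 := by
      apply Finset.sum_eq_zero
      intro j hj
      simp only [Finset.mem_filter, Finset.mem_univ, true_and, not_lt] at hj
      exact hzero j hj
    have h3 : (∑ j ∈ Finset.univ.filter (fun j => j < i), g j)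
        ≤ (Finset.univ.filter (fun j => j < i)).card := by
      calc (∑ j ∈ Finset.univ.filter (fun j => j < i), g j)
          ≤ ∑ _j ∈ Finset.univ.filter (fun j => j < i), 1 :=
            Finset.sum_le_sum (fun j _ => h1 j)
        _ = (Finset.univ.filter (fun j => j < i)).card := by simp
    have h4 : (Finset.univ.filter (fun j => j < i)).card = (i : ℕ) := by
      have : Finset.univ.filter (fun j => j < i) = Finset.Iio i := by
        ext j; simp
      rw [this, Fin.card_Iio]
    omega
  · by_contra hne
    have hgi : g i = 1 := by have := h1 i; omega
    have hone : ∀ j, j ≤ i → 1 ≤ g j := fun j hj => by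
      have := hg hj; omega
    have hsplit : ∑ j, g j = (∑ j ∈ Finset.univ.filter (fun j => j ≤ i), g j)
        + ∑ j ∈ Finset.univ.filter (fun j => ¬ j ≤ i), g j := by
      rw [Finset.sum_filter_add_sum_filter_not]
    have h3 : (Finset.univ.filter (fun j => j ≤ i)).card
        ≤ ∑ j ∈ Finset.univ.filter (fun j => j ≤ i), g j := by
      calc ((Finset.univ.filter (fun j => j ≤ i)).card : ℕ)
          = ∑ _j ∈ Finset.univ.filter (fun j => j ≤ i), 1 := by simp
        _ ≤ _ := Finset.sum_le_sum (fun j hj => by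
            simp only [Finset.mem_filter, Finset.mem_univ, true_and] at hj
            exact hone j hj)
    have h4 : (Finset.univ.filter (fun j => j ≤ i)).card = (i : ℕ) + 1 := by
      have : Finset.univ.filter (fun j => j ≤ i) = Finset.Iic i := by
        ext j; simp
      rw [this, Fin.card_Iic]
    omega


lemma entry_ext {e f : Entry r m} (h1 : e.1 = f.1) (h2 : (e.2 : ℕ) = (f.2 : ℕ)) : e = f := by
  obtain ⟨c, a⟩ := e; obtain ⟨c', a'⟩ := f
  cases h1
  exact congrArg _ (Fin.ext h2)


/-- For `λ = ((1^n), ∅, …, ∅)`: `β_{λμ} = 1` if `μ = ((1^{n₁}), …, (1^{n_r}))`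
with `n₁ + … + n_r = n`, and `β_{λμ} = 0` otherwise. -/
theorem beta_column_first (r n : ℕ) (hr : 1 ≤ r) (m : Fin r → ℕ) (hm : ∀ k, n ≤ m k)
    (lam : MComp r m)
    (hlamdef : ∀ k i, lam k i = if (k : ℕ) = 0 ∧ (i : ℕ) < n then 1 else 0)
    (mu : MComp r m) (hmu : IsMPartition mu) (hmus : size mu = n) :
    ((∃ ns : Fin r → ℕ, (∑ k, ns k = n) ∧
        ∀ k i, mu k i = if (i : ℕ) < ns k then 1 else 0) → beta lam mu = 1) ∧
    ((¬ ∃ ns : Fin r → ℕ, (∑ k, ns k = n) ∧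
        ∀ k i, mu k i = if (i : ℕ) < ns k then 1 else 0) → beta lam mu = 0) := by
  classical
  have hinj : Function.Injective (erank (r := r) (m := m)) := erank_injective
  let k0 : Fin r := ⟨0, hr⟩
  have hdiag : ∀ x : Box r m, InDiag lam x ↔
      ((x.1 : ℕ) = 0 ∧ (x.2.1 : ℕ) < n ∧ x.2.2 = 0) := by
    intro x
    show x.2.2 < lam x.1 x.2.1 ↔ _
    rw [hlamdef]
    split_ifs with h
    · obtain ⟨h1, h2⟩ := h
      constructor
      · intro hx; exact ⟨h1, h2, by omega⟩
      · rintro ⟨-, -, h3⟩; omega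
    · constructor
      · omega
      · rintro ⟨h1, h2, -⟩; exact absurd ⟨h1, h2⟩ h
  let box : Fin n → {x : Box r m // InDiag lam x} := fun i =>
    ⟨⟨k0, (⟨(i : ℕ), lt_of_lt_of_le i.isLt (hm k0)⟩, 0)⟩,
      (hdiag _).mpr ⟨rfl, i.isLt, rfl⟩⟩
  have hbox_surj : ∀ x : {x : Box r m // InDiag lam x}, ∃ i : Fin n, x = box i := by
    rintro ⟨⟨k, i, j⟩, hx⟩
    obtain ⟨h1, h2, h3⟩ := (hdiag _).mp hx
    have hk : k = k0 := Fin.ext h1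
    subst hk
    subst h3
    exact ⟨⟨(i : ℕ), h2⟩, Subtype.ext (by simp [box])⟩
  haveI hfin : Finite {x : Box r m // InDiag lam x} := by
    apply Finite.of_injective (fun x : {x : Box r m // InDiag lam x} =>
      (⟨(x.1.2.1 : ℕ), ((hdiag _).mp x.2).2.1⟩ : Fin n))
    intro x y hxy
    obtain ⟨i, rfl⟩ := hbox_surj x
    obtain ⟨i', rfl⟩ := hbox_surj y
    have hval : (i : ℕ) = (i' : ℕ) := congrArg Fin.val hxy
    exact congrArg box (Fin.ext hval)
  have hSST_main : ∀ T, IsSST (InDiag lam) mu T →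
      StrictMono (fun i : Fin n => erank (T (box i))) ∧
      (∀ e : Entry r m, mu e.1 e.2 = 1 ↔ ∃ i, T (box i) = e) ∧
      (∀ e : Entry r m, mu e.1 e.2 ≤ 1) := by
    intro T hT
    have hsucc : ∀ (i : ℕ) (h1 : i + 1 < n),
        erank (T (box ⟨i, Nat.lt_of_succ_lt h1⟩)) < erank (T (box ⟨i + 1, h1⟩)) := by
      intro i h1
      exact (entryLT_iff _ _).mp (hT.col_strict _ _ rfl rfl rfl)
    have hmono : StrictMono (fun i : Fin n => erank (T (box i))) := by
      intro i j hij
      exact strictMono_of_succ (fun i => erank (T (box i))) hsucc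
        (i : ℕ) (j : ℕ) i.isLt j.isLt hij
    have hinjf : Function.Injective (fun i : Fin n => T (box i)) := by
      intro i j h
      rcases Nat.lt_trichotomy (i : ℕ) (j : ℕ) with hlt | heq | hlt
      · have h' : T (box i) = T (box j) := h
        have := hmono (show i < j from hlt)
        simp only [h'] at this
        exact absurd this (lt_irrefl _)
      · exact Fin.ext heq
      · have h' : T (box i) = T (box j) := h
        have := hmono (show j < i from hlt)
        simp only [h'] at this
        exact absurd this (lt_irrefl _)
    have hfib : ∀ e : Entry r m,
        Nat.card {x : {x : Box r m // InDiag lam x} // T x = e} ≤ 1 := by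
      intro e
      haveI : Subsingleton {x : {x : Box r m // InDiag lam x} // T x = e} := by
        constructor
        rintro ⟨x, hx⟩ ⟨y, hy⟩
        apply Subtype.ext
        obtain ⟨i, rfl⟩ := hbox_surj x
        obtain ⟨i', rfl⟩ := hbox_surj y
        exact congrArg box (hinjf (hx.trans hy.symm))
      exact natcard_le_one _
    refine ⟨hmono, ?_, fun e => (hT.weight e) ▸ hfib e⟩
    intro e
    have hw := hT.weight e
    constructor
    · intro he
      have hpos : 0 < Nat.card {x : {x : Box r m // InDiag lam x} // T x = e} := by omega
      obtain ⟨⟨x, hx⟩⟩ := (Nat.card_pos_iff.mp hpos).1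
      obtain ⟨i, rfl⟩ := hbox_surj x
      exact ⟨i, hx⟩
    · rintro ⟨i, hi⟩
      haveI : Nonempty {x : {x : Box r m // InDiag lam x} // T x = e} := ⟨⟨box i, hi⟩⟩
      have hpos := Nat.card_pos (α := {x : {x : Box r m // InDiag lam x} // T x = e})
      have hle := hfib e
      omega
  constructor
  · rintro ⟨ns, hsum, hcol⟩
    have hnsle : ∀ c : Fin r, ns c ≤ n := by
      intro c
      rw [← hsum]
      exact Finset.single_le_sum (fun k _ => Nat.zero_le _) (Finset.mem_univ c)
    set S : Finset (Entry r m) := Finset.univ.filter (fun e => mu e.1 e.2 = 1) with hSdef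
    have hmem : ∀ e : Entry r m, e ∈ S ↔ mu e.1 e.2 = 1 := by intro e; simp [hSdef]
    have hmem' : ∀ e : Entry r m, e ∈ S ↔ (e.2 : ℕ) < ns e.1 := by
      intro e
      rw [hmem e, hcol e.1 e.2]
      by_cases h : (e.2 : ℕ) < ns e.1 <;> simp [h]
    have hcard : S.card = n := by
      rw [hSdef, Finset.card_filter]
      have h1 : ∀ e ∈ Finset.univ (α := Entry r m),
          (if mu e.1 e.2 = 1 then 1 else 0) = mu e.1 e.2 := by
        intro e _
        rw [hcol e.1 e.2]
        by_cases h : (e.2 : ℕ) < ns e.1 <;> simp [h]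
      rw [Finset.sum_congr rfl h1, ← hmus]
      show _ = ∑ k, ∑ i, mu k i
      rw [← Finset.univ_sigma_univ, Finset.sum_sigma]
    let SN : Finset ℕ := S.image erank
    have hcardN : SN.card = n := by
      show (S.image erank).card = n
      rw [Finset.card_image_of_injective _ hinj, hcard]
    let G : Fin n ↪o ℕ := SN.orderEmbOfFin hcardN
    have hGmem : ∀ i, ∃ e ∈ S, erank e = G i := by
      intro i
      have h2 : G i ∈ S.image erank := Finset.orderEmbOfFin_mem SN hcardN i
      rw [Finset.mem_image] at h2
      exact h2
    let F : Fin n → Entry r m := fun i => (hGmem i).choose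
    have hFS : ∀ i, F i ∈ S := fun i => (hGmem i).choose_spec.1
    have hFrank : ∀ i, erank (F i) = G i := fun i => (hGmem i).choose_spec.2
    have hFlt : ∀ i j : Fin n, i < j → entryLT (F i) (F j) := by
      intro i j hij
      rw [entryLT_iff, hFrank, hFrank]
      exact G.strictMono hij
    have hFinj : Function.Injective F := by
      intro i j h
      apply G.injective
      rw [← hFrank, ← hFrank, h]
    have hrangeF : ∀ e ∈ S, ∃ i, F i = e := by
      intro e he
      have h2 : erank e ∈ SN := Finset.mem_image_of_mem _ he
      have h3 : erank e ∈ Set.range ⇑G := by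
        rw [Finset.range_orderEmbOfFin]; exact h2
      obtain ⟨i, hi⟩ := h3
      exact ⟨i, hinj (by rw [hFrank, hi])⟩
    let T0 : {x : Box r m // InDiag lam x} → Entry r m :=
      fun x => F ⟨(x.1.2.1 : ℕ), ((hdiag _).mp x.2).2.1⟩
    have hT0box : ∀ i : Fin n, T0 (box i) = F i := fun i => rfl
    have hT0memS : ∀ x, T0 x ∈ S := fun x => hFS _
    have hT0inj : Function.Injective T0 := by
      intro x y hxy
      obtain ⟨i, rfl⟩ := hbox_surj x
      obtain ⟨i', rfl⟩ := hbox_surj y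
      rw [hT0box, hT0box] at hxy
      exact congrArg box (hFinj hxy)
    have hT0 : IsSST (InDiag lam) mu T0 := by
      constructor
      · intro x
        have h1 := ((hdiag _).mp x.2).1
        omega
      · intro x y _ _ hj
        have h1 := ((hdiag _).mp x.2).2.2
        have h2 := ((hdiag _).mp y.2).2.2
        omega
      · intro x y hk hi hj
        have hlt : (⟨(x.1.2.1 : ℕ), ((hdiag _).mp x.2).2.1⟩ : Fin n) <
            ⟨(y.1.2.1 : ℕ), ((hdiag _).mp y.2).2.1⟩ := by
          rw [Fin.mk_lt_mk]; omega
        exact hFlt _ _ hlt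
      · intro e
        by_cases he : mu e.1 e.2 = 1
        · obtain ⟨i0, hi0⟩ := hrangeF e ((hmem e).mpr he)
          haveI : Nonempty {x // T0 x = e} := ⟨⟨box i0, by rw [hT0box]; exact hi0⟩⟩
          haveI : Subsingleton {x // T0 x = e} := by
            constructor
            rintro ⟨x, hx⟩ ⟨y, hy⟩
            exact Subtype.ext (hT0inj (hx.trans hy.symm))
          rw [he]
          exact Nat.card_unique.symm
        · have he0 : mu e.1 e.2 = 0 := by
            have h2 := hcol e.1 e.2
            by_cases h : (e.2 : ℕ) < ns e.1 <;> simp [h] at h2 <;> omega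
          haveI : IsEmpty {x // T0 x = e} := by
            constructor
            rintro ⟨x, hx⟩
            exact he ((hmem e).mp (hx ▸ hT0memS x))
          rw [he0]
          exact Nat.card_of_isEmpty.symm
    have hT0sing : IsSingular (InDiag lam) T0 := by
      intro b a
      by_cases hne : Nonempty {y : {x : Box r m // InDiag lam x} //
          (T0 y).1 = (T0 b).1 ∧ BoxGE y.1 b.1 ∧ ((T0 y).2 : ℕ) = a + 1}
      · haveI := hne
        haveI : Subsingleton {y : {x : Box r m // InDiag lam x} //
            (T0 y).1 = (T0 b).1 ∧ BoxGE y.1 b.1 ∧ ((T0 y).2 : ℕ) = a + 1} := by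
          constructor
          rintro ⟨y1, hc1, -, hv1⟩ ⟨y2, hc2, -, hv2⟩
          apply Subtype.ext
          show y1 = y2
          apply hT0inj
          apply entry_ext (hc1.trans hc2.symm)
          omega
        obtain ⟨y, hc1, hge, hv⟩ := hne
        obtain ⟨iy, rfl⟩ := hbox_surj y
        obtain ⟨ib, rfl⟩ := hbox_surj b
        rw [hT0box] at hc1 hv
        have hFS' : F iy ∈ S := hFS iy
        have hlt1 : ((F iy).2 : ℕ) < ns (F iy).1 := (hmem' _).mp hFS'
        have hanc : a < ns (F iy).1 := by omega
        let e' : Entry r m :=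
          ⟨(F iy).1, ⟨a, lt_of_lt_of_le hanc (le_trans (hnsle _) (hm _))⟩⟩
        have he'S : e' ∈ S := (hmem' e').mpr hanc
        obtain ⟨i', hi'⟩ := hrangeF e' he'S
        have hi'lt : (i' : ℕ) < (iy : ℕ) := by
          have hpe := psum_congr (m := m) (c := e'.1) (c' := (F iy).1) rfl
          have he2 : (e'.2 : ℕ) = a := rfl
          have herank : erank e' < erank (F iy) := by
            unfold erank
            omega
          have hGlt : G i' < G iy := by
            rw [← hFrank, ← hFrank, hi']
            exact herank
          exact G.lt_iff_lt.mp hGlt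
        have hib : (iy : ℕ) ≤ (ib : ℕ) := by
          simp only [BoxGE] at hge
          have e1 : ((box ib).1.1 : ℕ) = 0 := rfl
          have e2 : ((box iy).1.1 : ℕ) = 0 := rfl
          have e3 : (box ib).1.2.2 = 0 := rfl
          have e4 : (box iy).1.2.2 = 0 := rfl
          have e5 : ((box iy).1.2.1 : ℕ) = (iy : ℕ) := rfl
          have e6 : ((box ib).1.2.1 : ℕ) = (ib : ℕ) := rfl
          rcases hge with h | ⟨-, h | ⟨-, h⟩⟩ <;> omega
        haveI : Nonempty {y : {x : Box r m // InDiag lam x} //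
            (T0 y).1 = (T0 (box ib)).1 ∧ BoxGE y.1 (box ib).1 ∧ ((T0 y).2 : ℕ) = a} := by
          refine ⟨⟨box i', ?_, ?_, ?_⟩⟩
          · rw [hT0box, hi']
            exact hc1
          · refine Or.inr ⟨rfl, Or.inr ⟨rfl, ?_⟩⟩
            show (i' : ℕ) ≤ (ib : ℕ)
            omega
          · rw [hT0box, hi']
        have hone : Nat.card {y : {x : Box r m // InDiag lam x} //
            (T0 y).1 = (T0 (box ib)).1 ∧ BoxGE y.1 (box ib).1 ∧ ((T0 y).2 : ℕ) = a + 1} = 1 :=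
          Nat.card_unique
        have hpos := Nat.card_pos (α := {y : {x : Box r m // InDiag lam x} //
            (T0 y).1 = (T0 (box ib)).1 ∧ BoxGE y.1 (box ib).1 ∧ ((T0 y).2 : ℕ) = a})
        omega
      · haveI := not_nonempty_iff.mp hne
        rw [Nat.card_of_isEmpty]
        exact Nat.zero_le _
    have huniq : ∀ T, IsSST (InDiag lam) mu T → T = T0 := by
      intro T hT
      obtain ⟨hmono, hiff, -⟩ := hSST_main T hT
      have hfS' : ∀ i, T (box i) ∈ S := fun i => (hmem _).mpr ((hiff _).mpr ⟨i, rfl⟩)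
      have hfSN : ∀ i, erank (T (box i)) ∈ SN := fun i => Finset.mem_image_of_mem _ (hfS' i)
      have heq := Finset.orderEmbOfFin_unique hcardN hfSN hmono
      funext x
      obtain ⟨i, rfl⟩ := hbox_surj x
      rw [hT0box]
      apply hinj
      rw [hFrank]
      exact congrFun heq i
    simp only [beta, nSingSST]
    haveI : Nonempty {T : {x : Box r m // InDiag lam x} → Entry r m //
        IsSST (InDiag lam) mu T ∧ IsSingular (InDiag lam) T} := ⟨⟨T0, hT0, hT0sing⟩⟩
    haveI : Subsingleton {T : {x : Box r m // InDiag lam x} → Entry r m //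
        IsSST (InDiag lam) mu T ∧ IsSingular (InDiag lam) T} :=
      ⟨fun A B => Subtype.ext ((huniq _ A.2.1).trans (huniq _ B.2.1).symm)⟩
    exact Nat.card_unique
  · intro hno
    simp only [beta, nSingSST]
    haveI : IsEmpty {T : {x : Box r m // InDiag lam x} → Entry r m //
        IsSST (InDiag lam) mu T ∧ IsSingular (InDiag lam) T} := by
      constructor
      rintro ⟨T, hT, -⟩
      apply hno
      obtain ⟨-, -, hle1⟩ := hSST_main T hT
      refine ⟨fun k => ∑ i, mu k i, ?_, ?_⟩
      · rw [← hmus]; rfl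
      · intro k i
        exact antitone01 (mu k) (hmu k) (fun j => hle1 ⟨k, j⟩) i
    exact Nat.card_of_isEmpty


end CQSA
end

section
/- Fix p = (r_1,…,r_g) with positive integers r_k and r_1+…+r_g = r, and set p_k = r_1+…+r_{k-1} (p_1 = 0). For an r-partition λ write λ^{[k]} = (λ^{(p_k+1)},…,λ^{(p_k+r_k)}), an r_k-partition, and ζ^p(λ) = (|λ^{[1]}|,…,|λ^{[g]}|). If λ, μ are r-partitions of size n with ζ^p(λ) = ζ^p(μ), then β_{λμ} = Π_{k=1}^g β_{λ^{[k]} μ^{[k]}}, where each factor β_{λ^{[k]} μ^{[k]}} is the number of singular semistandard tableaux of shape λ^{[k]} and weight μ^{[k]} for r_k-partitions of size |λ^{[k]}| (defined by the same rules with r replaced by r_k). -/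
open scoped BigOperators

namespace CQSA

variable {r : ℕ} {m : Fin r → ℕ}

section BlockFactorization

variable {g : ℕ}

/-- Partial sums of block sizes. -/
def Pk (rs : Fin g → ℕ) (k : Fin g) : ℕ := ∑ l ∈ Finset.univ.filter (fun l => l < k), rs l

lemma Pk_add_le {rs : Fin g → ℕ} {k k' : Fin g} (h : k < k') : Pk rs k + rs k ≤ Pk rs k' := by
  classical
  have hk : k ∉ Finset.univ.filter (fun l => l < k) := by simp
  have h2 : (∑ l ∈ insert k (Finset.univ.filter (fun l => l < k)), rs l)
      = rs k + ∑ l ∈ Finset.univ.filter (fun l => l < k), rs l := Finset.sum_insert hk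
  have hsub : insert k (Finset.univ.filter (fun l => l < k))
      ⊆ Finset.univ.filter (fun l => l < k') := by
    intro l hl
    simp only [Finset.mem_insert, Finset.mem_filter, Finset.mem_univ, true_and] at hl ⊢
    rcases hl with rfl | hl
    · exact h
    · exact lt_trans hl h
  calc Pk rs k + rs k = ∑ l ∈ insert k (Finset.univ.filter (fun l => l < k)), rs l := by
        rw [h2, Pk]; omega
    _ ≤ _ := Finset.sum_le_sum_of_subset hsub

lemma ord_eq {rs : Fin g → ℕ} {k k' : Fin g} {j j' : ℕ} (hj : j < rs k) (hj' : j' < rs k')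
    (h : Pk rs k + j = Pk rs k' + j') : k = k' ∧ j = j' := by
  rcases lt_trichotomy k k' with h1 | h1 | h1
  · have := Pk_add_le (rs := rs) h1; omega
  · exact ⟨h1, by cases h1; omega⟩
  · have := Pk_add_le (rs := rs) h1; omega

lemma ord_le {rs : Fin g → ℕ} {k k' : Fin g} {j j' : ℕ} (hj : j < rs k) (hj' : j' < rs k')
    (h : Pk rs k + j ≤ Pk rs k' + j') : k ≤ k' := by
  by_contra hc
  have h1 : k' < k := lt_of_not_ge hc
  have := Pk_add_le (rs := rs) h1
  omega

variable {r : ℕ}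

/-- The block index map as a function on sigma types. -/
def bIdx (rs : Fin g → ℕ) (hsum : ∑ l, rs l = r) : (Σ k : Fin g, Fin (rs k)) → Fin r :=
  fun p => blockIdx rs hsum p.1 p.2

lemma coe_blockIdx (rs : Fin g → ℕ) (hsum : ∑ l, rs l = r) (k : Fin g) (j : Fin (rs k)) :
    (blockIdx rs hsum k j : ℕ) = Pk rs k + j := rfl

lemma bIdx_inj (rs : Fin g → ℕ) (hsum : ∑ l, rs l = r) :
    Function.Injective (bIdx rs hsum) := by
  rintro ⟨k, j⟩ ⟨k', j'⟩ h
  have hval : Pk rs k + (j : ℕ) = Pk rs k' + (j' : ℕ) := congrArg Fin.val h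
  obtain ⟨hk, hj⟩ := ord_eq j.isLt j'.isLt hval
  subst hk
  exact Sigma.ext rfl (heq_of_eq (Fin.ext hj))

/-- The equivalence `Σ k, Fin (rs k) ≃ Fin r`. -/
noncomputable def Ei (rs : Fin g → ℕ) (hsum : ∑ l, rs l = r) : (Σ k : Fin g, Fin (rs k)) ≃ Fin r :=
  Equiv.ofBijective (bIdx rs hsum)
    ((Fintype.bijective_iff_injective_and_card _).mpr ⟨bIdx_inj rs hsum, by
      simp [Fintype.card_sigma, hsum]⟩)

lemma Ei_apply (rs : Fin g → ℕ) (hsum : ∑ l, rs l = r) (p : Σ k : Fin g, Fin (rs k)) :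
    Ei rs hsum p = blockIdx rs hsum p.1 p.2 := rfl

/-- The block of a component. -/
noncomputable def blk (rs : Fin g → ℕ) (hsum : ∑ l, rs l = r) (c : Fin r) : Fin g :=
  ((Ei rs hsum).symm c).1

lemma blk_blockIdx (rs : Fin g → ℕ) (hsum : ∑ l, rs l = r) (k : Fin g) (j : Fin (rs k)) :
    blk rs hsum (blockIdx rs hsum k j) = k :=
  congrArg Sigma.fst ((Ei rs hsum).symm_apply_apply ⟨k, j⟩)

lemma blk_mono (rs : Fin g → ℕ) (hsum : ∑ l, rs l = r) {c c' : Fin r}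
    (h : (c : ℕ) ≤ (c' : ℕ)) : blk rs hsum c ≤ blk rs hsum c' := by
  obtain ⟨⟨k, j⟩, rfl⟩ := (Ei rs hsum).surjective c
  obtain ⟨⟨k', j'⟩, rfl⟩ := (Ei rs hsum).surjective c'
  rw [Ei_apply] at h ⊢
  rw [Ei_apply (p := ⟨k', j'⟩)] at h ⊢
  rw [blk_blockIdx, blk_blockIdx]
  exact ord_le j.isLt j'.isLt h

section Maps

variable (rs : Fin g → ℕ) (hsum : ∑ l, rs l = r) (m : Fin r → ℕ)

/-- Local boxes of a block diagram, seen globally. -/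
def boxF (lam : MComp r m) :
    (Σ k : Fin g, {x : Box (rs k) (fun j => m (blockIdx rs hsum k j)) //
      InDiag (fun j => lam (blockIdx rs hsum k j)) x}) → {x : Box r m // InDiag lam x} :=
  fun p => ⟨⟨blockIdx rs hsum p.1 p.2.1.1, p.2.1.2⟩, p.2.2⟩

/-- Local entries of a block, seen globally. -/
def entryF : (Σ k : Fin g, Entry (rs k) (fun j => m (blockIdx rs hsum k j))) → Entry r m :=
  fun p => ⟨blockIdx rs hsum p.1 p.2.1, p.2.2⟩

lemma boxF_inj (lam : MComp r m) : Function.Injective (boxF rs hsum m lam) := by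
  rintro ⟨k, ⟨⟨j, ic⟩, h⟩⟩ ⟨k', ⟨⟨j', ic'⟩, h'⟩⟩ heq
  have h1 : (⟨blockIdx rs hsum k j, ic⟩ : Box r m) = ⟨blockIdx rs hsum k' j', ic'⟩ :=
    congrArg Subtype.val heq
  have h2 : blockIdx rs hsum k j = blockIdx rs hsum k' j' := congrArg Sigma.fst h1
  have h3 := bIdx_inj rs hsum (a₁ := ⟨k, j⟩) (a₂ := ⟨k', j'⟩) h2
  injection h3 with hk hj
  subst hk
  have hj' : j = j' := eq_of_heq hj
  subst hj'
  have hic : ic = ic' := by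
    have := sigma_mk_injective h1
    exact this
  subst hic
  rfl

lemma boxF_surj (lam : MComp r m) : Function.Surjective (boxF rs hsum m lam) := by
  rintro ⟨⟨c, i, col⟩, h⟩
  obtain ⟨⟨k, j⟩, rfl⟩ := (Ei rs hsum).surjective c
  exact ⟨⟨k, ⟨⟨j, (i, col)⟩, h⟩⟩, rfl⟩

lemma entryF_inj : Function.Injective (entryF rs hsum m) := by
  rintro ⟨k, ⟨j, a⟩⟩ ⟨k', ⟨j', a'⟩⟩ heq
  have h2 : blockIdx rs hsum k j = blockIdx rs hsum k' j' := congrArg Sigma.fst heq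
  have h3 := bIdx_inj rs hsum (a₁ := ⟨k, j⟩) (a₂ := ⟨k', j'⟩) h2
  injection h3 with hk hj
  subst hk
  have hj' : j = j' := eq_of_heq hj
  subst hj'
  have heq' : (⟨blockIdx rs hsum k j, a⟩ : Entry r m) = ⟨blockIdx rs hsum k j, a'⟩ := heq
  have ha : a = a' := sigma_mk_injective (β := fun c : Fin r => Fin (m c)) heq'
  subst ha
  rfl

lemma entryF_surj : Function.Surjective (entryF rs hsum m) := by
  rintro ⟨c, a⟩
  obtain ⟨⟨k, j⟩, rfl⟩ := (Ei rs hsum).surjective c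
  exact ⟨⟨k, ⟨j, a⟩⟩, rfl⟩

/-- The box equivalence. -/
noncomputable def eqB (lam : MComp r m) :
    (Σ k : Fin g, {x : Box (rs k) (fun j => m (blockIdx rs hsum k j)) //
      InDiag (fun j => lam (blockIdx rs hsum k j)) x}) ≃ {x : Box r m // InDiag lam x} :=
  Equiv.ofBijective _ ⟨boxF_inj rs hsum m lam, boxF_surj rs hsum m lam⟩

/-- The entry equivalence. -/
noncomputable def eqEn :
    (Σ k : Fin g, Entry (rs k) (fun j => m (blockIdx rs hsum k j))) ≃ Entry r m :=
  Equiv.ofBijective _ ⟨entryF_inj rs hsum m, entryF_surj rs hsum m⟩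

lemma eqB_apply (lam : MComp r m) (p) : (eqB rs hsum m lam p : {x : Box r m // InDiag lam x})
    = boxF rs hsum m lam p := rfl

lemma eqEn_apply (p) : eqEn rs hsum m p = entryF rs hsum m p := rfl

end Maps

section Cards

/-- Diagram as an iterated sigma type. -/
def diagEquiv {r' : ℕ} {m' : Fin r' → ℕ} (lam : MComp r' m') :
    {x : Box r' m' // InDiag lam x} ≃ Σ c : Fin r', Σ i : Fin (m' c), Fin (lam c i) where
  toFun x := ⟨x.1.1, x.1.2.1, ⟨x.1.2.2, x.2⟩⟩
  invFun p := ⟨⟨p.1, (p.2.1, p.2.2.1)⟩, p.2.2.2⟩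
  left_inv x := rfl
  right_inv p := rfl

instance diagFinite {r' : ℕ} {m' : Fin r' → ℕ} (lam : MComp r' m') :
    Finite {x : Box r' m' // InDiag lam x} :=
  Finite.of_equiv _ (diagEquiv lam).symm

lemma card_diag {r' : ℕ} {m' : Fin r' → ℕ} (lam : MComp r' m') :
    Nat.card {x : Box r' m' // InDiag lam x} = size lam := by
  classical
  rw [Nat.card_congr (diagEquiv lam), Nat.card_eq_fintype_card]
  simp [Fintype.card_sigma, size]

/-- The boxes of row-set `c` as a sigma type map. -/
def rowF {r' : ℕ} {m' : Fin r' → ℕ} (lam : MComp r' m') (c : Fin r') :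
    (Σ i : Fin (m' c), Fin (lam c i)) → {x : {x : Box r' m' // InDiag lam x} // x.1.1 = c} :=
  fun p => ⟨⟨⟨c, (p.1, (p.2.1 : ℕ))⟩, p.2.2⟩, rfl⟩

lemma card_row {r' : ℕ} {m' : Fin r' → ℕ} (lam : MComp r' m') (c : Fin r') :
    Nat.card {x : {x : Box r' m' // InDiag lam x} // x.1.1 = c} = ∑ i, lam c i := by
  classical
  have hbij : Function.Bijective (rowF lam c) := by
    constructor
    · rintro ⟨i, j⟩ ⟨i', j'⟩ h
      have h2 : (⟨c, (i, (j : ℕ))⟩ : Box r' m') = ⟨c, (i', (j' : ℕ))⟩ :=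
        congrArg (fun z => z.1.1) h
      have h3 : (i, (j : ℕ)) = (i', (j' : ℕ)) :=
        sigma_mk_injective (β := fun c : Fin r' => Fin (m' c) × ℕ) h2
      have hi : i = i' := congrArg Prod.fst h3
      subst hi
      have hj : (j : ℕ) = (j' : ℕ) := congrArg Prod.snd h3
      have hj' : j = j' := Fin.ext hj
      subst hj'
      rfl
    · rintro ⟨⟨⟨c', ij⟩, h⟩, hc⟩
      have hc' : c' = c := hc
      subst hc'
      exact ⟨⟨ij.1, ⟨ij.2, h⟩⟩, rfl⟩
  rw [Nat.card_congr (Equiv.ofBijective (rowF lam c) hbij).symm, Nat.card_eq_fintype_card]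
  simp [Fintype.card_sigma]

end Cards

section Transfer

variable (rs : Fin g → ℕ) (hsum : ∑ l, rs l = r) (m : Fin r → ℕ)

lemma entryLE_iff (k : Fin g) (e f : Entry (rs k) (fun j => m (blockIdx rs hsum k j))) :
    entryLE (eqEn rs hsum m ⟨k, e⟩) (eqEn rs hsum m ⟨k, f⟩) ↔ entryLE e f := by
  simp only [eqEn_apply, entryF, entryLE, coe_blockIdx]
  constructor <;> intro h <;> omega

lemma entryLT_iff_s9 (k : Fin g) (e f : Entry (rs k) (fun j => m (blockIdx rs hsum k j))) :
    entryLT (eqEn rs hsum m ⟨k, e⟩) (eqEn rs hsum m ⟨k, f⟩) ↔ entryLT e f := by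
  simp only [eqEn_apply, entryF, entryLT, coe_blockIdx]
  constructor <;> intro h <;> omega

lemma boxGE_iff (k : Fin g) (b b' : Box (rs k) (fun j => m (blockIdx rs hsum k j))) :
    BoxGE (⟨blockIdx rs hsum k b.1, b.2⟩ : Box r m) ⟨blockIdx rs hsum k b'.1, b'.2⟩
      ↔ BoxGE b b' := by
  simp only [BoxGE, coe_blockIdx]
  constructor <;> intro h <;> omega

/-- Cast of a local entry along an equality of block indices. -/
def castE {k k' : Fin g} (h : k = k')
    (e : Entry (rs k) (fun j => m (blockIdx rs hsum k j))) :
    Entry (rs k') (fun j => m (blockIdx rs hsum k' j)) := h ▸ e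

lemma sigma_castE (p : Σ k : Fin g, Entry (rs k) (fun j => m (blockIdx rs hsum k j)))
    (k : Fin g) (h : p.1 = k) :
    (⟨k, castE rs hsum m h p.2⟩ : Σ k : Fin g, Entry (rs k) (fun j => m (blockIdx rs hsum k j)))
      = p := by
  subst h
  rfl

lemma eqEn_symm_fst (e : Entry r m) :
    ((eqEn rs hsum m).symm e).1 = blk rs hsum e.1 := by
  obtain ⟨⟨k, a⟩, rfl⟩ := (eqEn rs hsum m).surjective e
  rw [(eqEn rs hsum m).symm_apply_apply]
  exact (blk_blockIdx rs hsum k a.1).symm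

end Transfer

section Rel

variable (rs : Fin g → ℕ) (hsum : ∑ l, rs l = r) (m : Fin r → ℕ) (lam mu : MComp r m)

/-- Compatibility between a global tableau and a family of local tableaux. -/
def Rrel (T : {x : Box r m // InDiag lam x} → Entry r m)
    (F : ∀ k : Fin g, {x : Box (rs k) (fun j => m (blockIdx rs hsum k j)) //
        InDiag (fun j => lam (blockIdx rs hsum k j)) x}
      → Entry (rs k) (fun j => m (blockIdx rs hsum k j))) : Prop :=
  ∀ (k : Fin g) (y : {x : Box (rs k) (fun j => m (blockIdx rs hsum k j)) //
      InDiag (fun j => lam (blockIdx rs hsum k j)) x}),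
    T (eqB rs hsum m lam ⟨k, y⟩) = eqEn rs hsum m ⟨k, F k y⟩

variable {rs hsum m lam mu}

lemma weight_card {T F} (hR : Rrel rs hsum m lam T F) (k : Fin g)
    (e : Entry (rs k) (fun j => m (blockIdx rs hsum k j))) :
    Nat.card {x : {x : Box r m // InDiag lam x} // T x = eqEn rs hsum m ⟨k, e⟩}
      = Nat.card {y : {x : Box (rs k) (fun j => m (blockIdx rs hsum k j)) //
          InDiag (fun j => lam (blockIdx rs hsum k j)) x} // F k y = e} := by
  refine (Nat.card_congr (Equiv.ofBijective
    (fun y => (⟨eqB rs hsum m lam ⟨k, y.1⟩, by rw [hR k y.1, y.2]⟩ :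
      {x : {x : Box r m // InDiag lam x} // T x = eqEn rs hsum m ⟨k, e⟩}))
    ⟨?_, ?_⟩)).symm
  · rintro y y' h
    have h1 : eqB rs hsum m lam ⟨k, y.1⟩ = eqB rs hsum m lam ⟨k, y'.1⟩ :=
      congrArg Subtype.val h
    have h2 := (eqB rs hsum m lam).injective h1
    exact Subtype.ext (sigma_mk_injective (β := fun k : Fin g => {x : Box (rs k) (fun j => m (blockIdx rs hsum k j)) // InDiag (fun j => lam (blockIdx rs hsum k j)) x}) h2)
  · rintro ⟨x, hx⟩
    obtain ⟨⟨k', y⟩, rfl⟩ := (eqB rs hsum m lam).surjective x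
    rw [hR k' y] at hx
    have h2 := (eqEn rs hsum m).injective hx
    have hk : k' = k := congrArg Sigma.fst h2
    subst hk
    have he : F k' y = e := sigma_mk_injective (β := fun k : Fin g => Entry (rs k) (fun j => m (blockIdx rs hsum k j))) h2
    exact ⟨⟨y, he⟩, Subtype.ext rfl⟩

lemma sing_card {T F} (hR : Rrel rs hsum m lam T F) (k : Fin g)
    (b : {x : Box (rs k) (fun j => m (blockIdx rs hsum k j)) //
        InDiag (fun j => lam (blockIdx rs hsum k j)) x}) (a : ℕ) :
    Nat.card {y : {x : Box r m // InDiag lam x} //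
        (T y).1 = (T (eqB rs hsum m lam ⟨k, b⟩)).1 ∧
        BoxGE y.1 (eqB rs hsum m lam ⟨k, b⟩).1 ∧ ((T y).2 : ℕ) = a}
      = Nat.card {y : {x : Box (rs k) (fun j => m (blockIdx rs hsum k j)) //
          InDiag (fun j => lam (blockIdx rs hsum k j)) x} //
        (F k y).1 = (F k b).1 ∧ BoxGE y.1 b.1 ∧ ((F k y).2 : ℕ) = a} := by
  refine (Nat.card_congr (Equiv.ofBijective
    (fun y => (⟨eqB rs hsum m lam ⟨k, y.1⟩, ?_, ?_, ?_⟩ :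
      {y : {x : Box r m // InDiag lam x} //
        (T y).1 = (T (eqB rs hsum m lam ⟨k, b⟩)).1 ∧
        BoxGE y.1 (eqB rs hsum m lam ⟨k, b⟩).1 ∧ ((T y).2 : ℕ) = a}))
    ⟨?_, ?_⟩)).symm
  · rw [hR k y.1, hR k b]
    exact congrArg (fun j => (blockIdx rs hsum k j : Fin r)) y.2.1
  · exact (boxGE_iff rs hsum m k y.1.1 b.1).mpr y.2.2.1
  · rw [hR k y.1]
    exact y.2.2.2
  · rintro y y' h
    have h1 : eqB rs hsum m lam ⟨k, y.1⟩ = eqB rs hsum m lam ⟨k, y'.1⟩ :=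
      congrArg Subtype.val h
    have h2 := (eqB rs hsum m lam).injective h1
    exact Subtype.ext (sigma_mk_injective (β := fun k : Fin g => {x : Box (rs k) (fun j => m (blockIdx rs hsum k j)) // InDiag (fun j => lam (blockIdx rs hsum k j)) x}) h2)
  · rintro ⟨x, hx1, hx2, hx3⟩
    obtain ⟨⟨k', y⟩, rfl⟩ := (eqB rs hsum m lam).surjective x
    rw [hR k' y, hR k b] at hx1
    rw [hR k' y] at hx3
    have hval : Pk rs k' + ((F k' y).1 : ℕ) = Pk rs k + ((F k b).1 : ℕ) :=
      congrArg Fin.val hx1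
    obtain ⟨hk, hj⟩ := ord_eq (F k' y).1.isLt (F k b).1.isLt hval
    subst hk
    refine ⟨⟨y, Fin.ext hj, (boxGE_iff rs hsum m k' y.1 b.1).mp hx2, hx3⟩, Subtype.ext rfl⟩

lemma isSST_iff {T F} (hR : Rrel rs hsum m lam T F) :
    IsSST (InDiag lam) mu T ↔ ∀ k : Fin g,
      IsSST (InDiag (fun j => lam (blockIdx rs hsum k j))) (fun j => mu (blockIdx rs hsum k j))
        (F k) := by
  constructor
  · intro hg k
    refine ⟨?_, ?_, ?_, ?_⟩
    · intro y
      have h0 := hg.comp_le (eqB rs hsum m lam ⟨k, y⟩)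
      rw [hR k y] at h0
      have h2 : Pk rs k + (y.1.1 : ℕ) ≤ Pk rs k + ((F k y).1 : ℕ) := h0
      omega
    · intro x y h1 h2 h3
      have h0 := hg.row_weak (eqB rs hsum m lam ⟨k, x⟩) (eqB rs hsum m lam ⟨k, y⟩)
        (congrArg (fun j => (blockIdx rs hsum k j : Fin r)) h1) h2 h3
      rw [hR k x, hR k y] at h0
      exact (entryLE_iff rs hsum m k _ _).mp h0
    · intro x y h1 h2 h3
      have h0 := hg.col_strict (eqB rs hsum m lam ⟨k, x⟩) (eqB rs hsum m lam ⟨k, y⟩)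
        (congrArg (fun j => (blockIdx rs hsum k j : Fin r)) h1) h2 h3
      rw [hR k x, hR k y] at h0
      exact (entryLT_iff_s9 rs hsum m k _ _).mp h0
    · intro e
      have h0 := hg.weight (eqEn rs hsum m ⟨k, e.1, e.2⟩)
      rw [weight_card hR k ⟨e.1, e.2⟩] at h0
      exact h0
  · intro hl
    refine ⟨?_, ?_, ?_, ?_⟩
    · intro x
      obtain ⟨⟨k, y⟩, rfl⟩ := (eqB rs hsum m lam).surjective x
      have h0 := (hl k).comp_le y
      rw [hR k y]
      show Pk rs k + (y.1.1 : ℕ) ≤ Pk rs k + ((F k y).1 : ℕ)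
      omega
    · intro x y h1 h2 h3
      obtain ⟨⟨k, xx⟩, rfl⟩ := (eqB rs hsum m lam).surjective x
      obtain ⟨⟨k', yy⟩, rfl⟩ := (eqB rs hsum m lam).surjective y
      have hval : Pk rs k + (xx.1.1 : ℕ) = Pk rs k' + (yy.1.1 : ℕ) := congrArg Fin.val h1
      obtain ⟨hk, hj⟩ := ord_eq xx.1.1.isLt yy.1.1.isLt hval
      subst hk
      rw [hR k xx, hR k yy]
      exact (entryLE_iff rs hsum m k _ _).mpr ((hl k).row_weak xx yy (Fin.ext hj) h2 h3)
    · intro x y h1 h2 h3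
      obtain ⟨⟨k, xx⟩, rfl⟩ := (eqB rs hsum m lam).surjective x
      obtain ⟨⟨k', yy⟩, rfl⟩ := (eqB rs hsum m lam).surjective y
      have hval : Pk rs k + (xx.1.1 : ℕ) = Pk rs k' + (yy.1.1 : ℕ) := congrArg Fin.val h1
      obtain ⟨hk, hj⟩ := ord_eq xx.1.1.isLt yy.1.1.isLt hval
      subst hk
      rw [hR k xx, hR k yy]
      exact (entryLT_iff_s9 rs hsum m k _ _).mpr ((hl k).col_strict xx yy (Fin.ext hj) h2 h3)
    · intro e
      obtain ⟨⟨k, el⟩, rfl⟩ := (eqEn rs hsum m).surjective e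
      rw [weight_card hR k el]
      exact (hl k).weight el

lemma isSing_iff {T F} (hR : Rrel rs hsum m lam T F) :
    IsSingular (InDiag lam) T ↔ ∀ k : Fin g,
      IsSingular (InDiag (fun j => lam (blockIdx rs hsum k j))) (F k) := by
  constructor
  · intro hs k b a
    rw [← sing_card hR k b a, ← sing_card hR k b (a + 1)]
    exact hs (eqB rs hsum m lam ⟨k, b⟩) a
  · intro hs b a
    obtain ⟨⟨k, y⟩, rfl⟩ := (eqB rs hsum m lam).surjective b
    rw [sing_card hR k y a, sing_card hR k y (a + 1)]
    exact hs k y a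

lemma cardA {T} (hT : IsSST (InDiag lam) mu T) (κ : Fin g) :
    Nat.card {x : {x : Box r m // InDiag lam x} // blk rs hsum (T x).1 ≤ κ}
      = ∑ e : Entry r m, if blk rs hsum e.1 ≤ κ then mu e.1 e.2 else 0 := by
  classical
  letI : Fintype {x : Box r m // InDiag lam x} := Fintype.ofFinite _
  rw [Nat.card_eq_fintype_card, Fintype.card_subtype]
  rw [Finset.card_eq_sum_card_fiberwise (f := T)
    (t := Finset.univ.filter (fun e : Entry r m => blk rs hsum e.1 ≤ κ))
    (fun x hx => by
      simp only [Finset.mem_coe, Finset.mem_filter, Finset.mem_univ, true_and] at hx ⊢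
      exact hx)]
  rw [Finset.sum_filter]
  refine Finset.sum_congr rfl ?_
  intro e _
  by_cases he : blk rs hsum e.1 ≤ κ
  · simp only [if_pos he]
    have hfil : (Finset.univ.filter (fun x => blk rs hsum (T x).1 ≤ κ)).filter
        (fun x => T x = e) = Finset.univ.filter (fun x => T x = e) := by
      ext x
      simp only [Finset.mem_filter, Finset.mem_univ, true_and]
      constructor
      · rintro ⟨_, h⟩; exact h
      · intro h; exact ⟨by rw [h]; exact he, h⟩
    rw [hfil, ← Fintype.card_subtype, ← Nat.card_eq_fintype_card]
    exact (hT.weight e).symm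
  · simp only [if_neg he]

lemma cardB (κ : Fin g) :
    Nat.card {x : {x : Box r m // InDiag lam x} // blk rs hsum x.1.1 ≤ κ}
      = ∑ c : Fin r, if blk rs hsum c ≤ κ then ∑ i, lam c i else 0 := by
  classical
  letI : Fintype {x : Box r m // InDiag lam x} := Fintype.ofFinite _
  rw [Nat.card_eq_fintype_card, Fintype.card_subtype]
  rw [Finset.card_eq_sum_card_fiberwise (f := fun x => x.1.1)
    (t := Finset.univ.filter (fun c : Fin r => blk rs hsum c ≤ κ))
    (fun x hx => by
      simp only [Finset.mem_coe, Finset.mem_filter, Finset.mem_univ, true_and] at hx ⊢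
      exact hx)]
  rw [Finset.sum_filter]
  refine Finset.sum_congr rfl ?_
  intro c _
  by_cases hc : blk rs hsum c ≤ κ
  · simp only [if_pos hc]
    have hfil : (Finset.univ.filter (fun x : {x : Box r m // InDiag lam x} =>
          blk rs hsum x.1.1 ≤ κ)).filter (fun x => x.1.1 = c)
        = Finset.univ.filter (fun x => x.1.1 = c) := by
      ext x
      simp only [Finset.mem_filter, Finset.mem_univ, true_and]
      constructor
      · rintro ⟨_, h⟩; exact h
      · intro h; exact ⟨by rw [h]; exact hc, h⟩
    rw [hfil, ← Fintype.card_subtype, ← Nat.card_eq_fintype_card]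
    exact card_row lam c
  · simp only [if_neg hc]

lemma sum_blk_reindex (κ : Fin g) (G : Fin r → ℕ) :
    (∑ c : Fin r, if blk rs hsum c ≤ κ then G c else 0)
      = ∑ k : Fin g, if k ≤ κ then ∑ j : Fin (rs k), G (blockIdx rs hsum k j) else 0 := by
  classical
  have heq := Fintype.sum_equiv (Ei rs hsum)
    (fun p => if blk rs hsum (Ei rs hsum p) ≤ κ then G (Ei rs hsum p) else 0)
    (fun c => if blk rs hsum c ≤ κ then G c else 0) (fun p => rfl)
  rw [← heq, ← Finset.univ_sigma_univ, Finset.sum_sigma]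
  refine Finset.sum_congr rfl ?_
  intro k _
  by_cases h : k ≤ κ
  · simp only [Ei_apply, blk_blockIdx, if_pos h]
  · simp only [Ei_apply, blk_blockIdx, if_neg h, Finset.sum_const_zero]

lemma sum_entry_comp (κ : Fin g) (w : MComp r m) :
    (∑ e : Entry r m, if blk rs hsum e.1 ≤ κ then w e.1 e.2 else 0)
      = ∑ c : Fin r, if blk rs hsum c ≤ κ then ∑ i, w c i else 0 := by
  classical
  rw [← Finset.univ_sigma_univ, Finset.sum_sigma]
  refine Finset.sum_congr rfl ?_
  intro c _
  by_cases h : blk rs hsum c ≤ κ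
  · simp only [if_pos h]
  · simp only [if_neg h, Finset.sum_const_zero]

lemma key_count {T} (hT : IsSST (InDiag lam) mu T)
    (hz : ∀ k : Fin g, (∑ j : Fin (rs k), ∑ i, lam (blockIdx rs hsum k j) i)
        = ∑ j : Fin (rs k), ∑ i, mu (blockIdx rs hsum k j) i)
    (κ : Fin g) (x : {x : Box r m // InDiag lam x}) (hx : blk rs hsum x.1.1 ≤ κ) :
    blk rs hsum (T x).1 ≤ κ := by
  classical
  have hcard : Nat.card {x : {x : Box r m // InDiag lam x} // blk rs hsum (T x).1 ≤ κ}
      = Nat.card {x : {x : Box r m // InDiag lam x} // blk rs hsum x.1.1 ≤ κ} := by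
    rw [cardA hT κ, cardB (lam := lam) κ, sum_entry_comp κ mu,
      sum_blk_reindex κ (fun c => ∑ i, mu c i), sum_blk_reindex κ (fun c => ∑ i, lam c i)]
    refine Finset.sum_congr rfl ?_
    intro k _
    rw [hz k]
  letI : Fintype {x : Box r m // InDiag lam x} := Fintype.ofFinite _
  have hsurj : Function.Surjective
      (fun y : {x : {x : Box r m // InDiag lam x} // blk rs hsum (T x).1 ≤ κ} =>
        (⟨y.1, le_trans (blk_mono rs hsum (hT.comp_le y.1)) y.2⟩ :
          {x : {x : Box r m // InDiag lam x} // blk rs hsum x.1.1 ≤ κ})) := by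
    refine ((Fintype.bijective_iff_injective_and_card _).mpr ⟨?_, ?_⟩).2
    · intro y y' h
      have h2 := congrArg
        (fun z : {x : {x : Box r m // InDiag lam x} // blk rs hsum x.1.1 ≤ κ} => z.1) h
      exact Subtype.ext h2
    · rw [← Nat.card_eq_fintype_card, ← Nat.card_eq_fintype_card]
      exact hcard
  obtain ⟨y, hy⟩ := hsurj ⟨x, hx⟩
  have : y.1 = x := congrArg Subtype.val hy
  rw [← this]
  exact y.2

lemma key_block {T} (hT : IsSST (InDiag lam) mu T)
    (hz : ∀ k : Fin g, (∑ j : Fin (rs k), ∑ i, lam (blockIdx rs hsum k j) i)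
        = ∑ j : Fin (rs k), ∑ i, mu (blockIdx rs hsum k j) i)
    (x : {x : Box r m // InDiag lam x}) :
    blk rs hsum (T x).1 = blk rs hsum x.1.1 :=
  le_antisymm (key_count hT hz (blk rs hsum x.1.1) x le_rfl)
    (blk_mono rs hsum (hT.comp_le x))

/-- Local tableaux extracted from a global tableau having the block property. -/
noncomputable def Floc (T : {x : Box r m // InDiag lam x} → Entry r m)
    (hkey : ∀ x : {x : Box r m // InDiag lam x},
      ((eqEn rs hsum m).symm (T x)).1 = blk rs hsum x.1.1)
    (k : Fin g)
    (y : {x : Box (rs k) (fun j => m (blockIdx rs hsum k j)) //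
        InDiag (fun j => lam (blockIdx rs hsum k j)) x}) :
    Entry (rs k) (fun j => m (blockIdx rs hsum k j)) :=
  castE rs hsum m
    (by rw [hkey (eqB rs hsum m lam ⟨k, y⟩)]; exact blk_blockIdx rs hsum k y.1.1)
    ((eqEn rs hsum m).symm (T (eqB rs hsum m lam ⟨k, y⟩))).2

lemma Rrel_Floc (T : {x : Box r m // InDiag lam x} → Entry r m)
    (hkey : ∀ x : {x : Box r m // InDiag lam x},
      ((eqEn rs hsum m).symm (T x)).1 = blk rs hsum x.1.1) :
    Rrel rs hsum m lam T (Floc T hkey) := by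
  intro k y
  have hp := sigma_castE rs hsum m ((eqEn rs hsum m).symm (T (eqB rs hsum m lam ⟨k, y⟩))) k
    (by rw [hkey (eqB rs hsum m lam ⟨k, y⟩)]; exact blk_blockIdx rs hsum k y.1.1)
  exact ((congrArg (eqEn rs hsum m) hp).trans
    ((eqEn rs hsum m).apply_symm_apply _)).symm

/-- Global tableau assembled from local tableaux. -/
noncomputable def Psi
    (F : ∀ k : Fin g, {x : Box (rs k) (fun j => m (blockIdx rs hsum k j)) //
        InDiag (fun j => lam (blockIdx rs hsum k j)) x}
      → Entry (rs k) (fun j => m (blockIdx rs hsum k j))) :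
    {x : Box r m // InDiag lam x} → Entry r m :=
  fun x => eqEn rs hsum m ⟨((eqB rs hsum m lam).symm x).1,
    F ((eqB rs hsum m lam).symm x).1 ((eqB rs hsum m lam).symm x).2⟩

lemma Rrel_Psi
    (F : ∀ k : Fin g, {x : Box (rs k) (fun j => m (blockIdx rs hsum k j)) //
        InDiag (fun j => lam (blockIdx rs hsum k j)) x}
      → Entry (rs k) (fun j => m (blockIdx rs hsum k j))) :
    Rrel rs hsum m lam (Psi F) F := by
  intro k y
  have h := (eqB rs hsum m lam).symm_apply_apply ⟨k, y⟩
  exact congrArg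
    (fun q : (Σ k : Fin g, {x : Box (rs k) (fun j => m (blockIdx rs hsum k j)) //
        InDiag (fun j => lam (blockIdx rs hsum k j)) x}) =>
      eqEn rs hsum m ⟨q.1, F q.1 q.2⟩) h

/-- The master equivalence between singular global tableaux and families of
singular local tableaux. -/
noncomputable def masterEquiv
    (hz : ∀ k : Fin g, (∑ j : Fin (rs k), ∑ i, lam (blockIdx rs hsum k j) i)
        = ∑ j : Fin (rs k), ∑ i, mu (blockIdx rs hsum k j) i) :
    {T : {x : Box r m // InDiag lam x} → Entry r m //
        IsSST (InDiag lam) mu T ∧ IsSingular (InDiag lam) T}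
    ≃ ∀ k : Fin g,
      {Tk : {x : Box (rs k) (fun j => m (blockIdx rs hsum k j)) //
          InDiag (fun j => lam (blockIdx rs hsum k j)) x}
        → Entry (rs k) (fun j => m (blockIdx rs hsum k j)) //
        IsSST (InDiag (fun j => lam (blockIdx rs hsum k j)))
          (fun j => mu (blockIdx rs hsum k j)) Tk ∧
        IsSingular (InDiag (fun j => lam (blockIdx rs hsum k j))) Tk} where
  toFun T := fun k =>
    ⟨Floc T.1 (fun x => (eqEn_symm_fst rs hsum m (T.1 x)).trans (key_block T.2.1 hz x)) k,
      (isSST_iff (Rrel_Floc T.1 _)).mp T.2.1 k,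
      (isSing_iff (Rrel_Floc T.1 _)).mp T.2.2 k⟩
  invFun F :=
    ⟨Psi (fun k => (F k).1),
      (isSST_iff (Rrel_Psi (fun k => (F k).1))).mpr (fun k => (F k).2.1),
      (isSing_iff (Rrel_Psi (fun k => (F k).1))).mpr (fun k => (F k).2.2)⟩
  left_inv := by
    rintro ⟨T, hT⟩
    apply Subtype.ext
    funext x
    obtain ⟨⟨k, y⟩, rfl⟩ := (eqB rs hsum m lam).surjective x
    have hkey : ∀ x : {x : Box r m // InDiag lam x},
        ((eqEn rs hsum m).symm (T x)).1 = blk rs hsum x.1.1 :=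
      fun x => (eqEn_symm_fst rs hsum m (T x)).trans (key_block hT.1 hz x)
    exact (Rrel_Psi (fun k => Floc T hkey k) k y).trans (Rrel_Floc T hkey k y).symm
  right_inv := by
    intro F
    funext k
    apply Subtype.ext
    funext y
    have h1 := Rrel_Floc (Psi (fun k => (F k).1))
      (fun x => (eqEn_symm_fst rs hsum m _).trans
        (key_block ((isSST_iff (Rrel_Psi (fun k => (F k).1))).mpr (fun k => (F k).2.1)) hz x))
      k y
    have h2 := Rrel_Psi (fun k => (F k).1) k y
    have h3 := (eqEn rs hsum m).injective (h1.symm.trans h2)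
    exact sigma_mk_injective
      (β := fun k : Fin g => Entry (rs k) (fun j => m (blockIdx rs hsum k j))) h3

end Rel

/-- Block factorization: if `ζ^p(λ) = ζ^p(μ)` for a composition
`p = (r₁, …, r_g)` of `r`, then `β_{λμ} = ∏_{k=1}^g β_{λ^{[k]} μ^{[k]}}`. -/
theorem beta_block_factorization (r n g : ℕ) (hr : 1 ≤ r) (m : Fin r → ℕ) (hm : ∀ k, n ≤ m k)
    (rs : Fin g → ℕ) (hrs : ∀ k, 1 ≤ rs k) (hsum : ∑ l, rs l = r)
    (lam mu : MComp r m) (hlam : IsMPartition lam) (hlams : size lam = n)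
    (hmu : IsMPartition mu) (hmus : size mu = n)
    (hz : ∀ k : Fin g, (∑ j : Fin (rs k), ∑ i, lam (blockIdx rs hsum k j) i)
        = ∑ j : Fin (rs k), ∑ i, mu (blockIdx rs hsum k j) i) :
    beta lam mu = ∏ k : Fin g,
      beta (m := fun j => m (blockIdx rs hsum k j))
        (fun j => lam (blockIdx rs hsum k j)) (fun j => mu (blockIdx rs hsum k j)) := by
  classical
  refine (Nat.card_congr (masterEquiv (hsum := hsum) (mu := mu) hz)).trans ?_
  exact Nat.card_pi

end BlockFactorization

end CQSA
end
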